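/- arXiv:1009.1940 — 3 statements merged into one kernel-verified Lean document; each statement's English description precedes it below -/
import Mathlib

section
/- Let k be a field, g a Lie algebra over k, and D : g → End_k(g) a k-linear map such that: (i) for every X ∈ g, D(X) is a derivation of g, i.e. D(X)⁅Y,Z⁆ = ⁅D(X)Y, Z⁆ + ⁅Y, D(X)Z⁆ for all Y,Z; (ii) D(X) ∘ D(Y) = D(Y) ∘ D(X) for all X,Y ∈ g; (iii) D(⁅X,Y⁆) = 0 for all X,Y ∈ g; (iv) D(D(X)(Y)) = 0 for all X,Y ∈ g. Then the map (X,Y) ↦ ⁅X,Y⁆ − D(X)(Y) + D(Y)(X) is a Lie bracket on the underlying k-vector space of g: it is bilinear, alternating, and satisfies the Jacobi identity. -/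
/-- The "unipotent-hull bracket" on a Lie algebra `g` associated to a linear map
`D : g → End(g)`: `⁅X, Y⁆' = ⁅X, Y⁆ - D X Y + D Y X`. -/
def uhBracket {k : Type*} [Field k] {g : Type*} [LieRing g] [LieAlgebra k g]
    (D : g →ₗ[k] Module.End k g) (X Y : g) : g :=
  ⁅X, Y⁆ - D X Y + D Y X

/-- If `D : g → End(g)` is a linear map such that each `D X` is a derivation of `g`,
the endomorphisms `D X` pairwise commute, `D` vanishes on brackets, and `D` vanishes
on the image of every `D X`, then the unipotent-hull bracket
`(X, Y) ↦ ⁅X, Y⁆ - D X Y + D Y X` is a Lie bracket on the underlying vector space of `g`: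
it is bilinear, alternating and satisfies the Jacobi identity. -/
theorem uhBracket_isLieBracket {k : Type*} [Field k] {g : Type*} [LieRing g] [LieAlgebra k g]
    (D : g →ₗ[k] Module.End k g)
    (hder : ∀ X Y Z : g, D X ⁅Y, Z⁆ = ⁅D X Y, Z⁆ + ⁅Y, D X Z⁆)
    (hcomm : ∀ X Y : g, D X ∘ₗ D Y = D Y ∘ₗ D X)
    (hbracket : ∀ X Y : g, D ⁅X, Y⁆ = 0)
    (hDD : ∀ X Y : g, D (D X Y) = 0) :
    (∀ X Y Z : g, uhBracket D (X + Y) Z = uhBracket D X Z + uhBracket D Y Z) ∧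
    (∀ (c : k) (X Y : g), uhBracket D (c • X) Y = c • uhBracket D X Y) ∧
    (∀ X Y Z : g, uhBracket D X (Y + Z) = uhBracket D X Y + uhBracket D X Z) ∧
    (∀ (c : k) (X Y : g), uhBracket D X (c • Y) = c • uhBracket D X Y) ∧
    (∀ X : g, uhBracket D X X = 0) ∧
    (∀ X Y Z : g,
      uhBracket D X (uhBracket D Y Z) + uhBracket D Y (uhBracket D Z X) +
        uhBracket D Z (uhBracket D X Y) = 0) := by
  have hcomm' : ∀ X Y Z : g, D X (D Y Z) = D Y (D X Z) := fun X Y Z =>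
    congrFun (congrArg DFunLike.coe (hcomm X Y)) Z
  have hD0 : ∀ X Y : g, D (uhBracket D X Y) = 0 := fun X Y => by
    simp [uhBracket, map_add, map_sub, hbracket, hDD]
  refine ⟨?_, ?_, ?_, ?_, ?_, ?_⟩
  · intro X Y Z; simp only [uhBracket, add_lie, map_add, LinearMap.add_apply]; abel
  · intro c X Y; simp only [uhBracket, smul_lie, map_smul, LinearMap.smul_apply,
      smul_sub, smul_add]
  · intro X Y Z; simp only [uhBracket, lie_add, map_add, LinearMap.add_apply]; abel
  · intro c X Y; simp only [uhBracket, lie_smul, map_smul, LinearMap.smul_apply,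
      smul_sub, smul_add]
  · intro X; simp [uhBracket]
  · intro X Y Z
    have e : ∀ A B C : g, uhBracket D A (uhBracket D B C)
        = ⁅A, ⁅B, C⁆⁆ - ⁅A, D B C⁆ + ⁅A, D C B⁆
          - (⁅D A B, C⁆ + ⁅B, D A C⁆) + D A (D B C) - D A (D C B) := by
      intro A B C
      rw [uhBracket, hD0, LinearMap.zero_apply, add_zero, uhBracket]
      simp only [lie_sub, lie_add, map_sub, map_add, hder]
      abel
    rw [e, e, e, hcomm' X Y Z, hcomm' X Z Y, hcomm' Y Z X]
    have j : ⁅X, ⁅Y, Z⁆⁆ + ⁅Y, ⁅Z, X⁆⁆ + ⁅Z, ⁅X, Y⁆⁆ = 0 := lie_jacobi X Y Z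
    have s1 : ⁅D X Y, Z⁆ = -⁅Z, D X Y⁆ := (lie_skew _ _).symm
    have s2 : ⁅D Y Z, X⁆ = -⁅X, D Y Z⁆ := (lie_skew _ _).symm
    have s3 : ⁅D Z X, Y⁆ = -⁅Y, D Z X⁆ := (lie_skew _ _).symm
    rw [s1, s2, s3]
    linear_combination (norm := abel) j
end

section
/- Let k be a field, g a Lie algebra over k, and D : g → End_k(g) a k-linear map such that: (i) each D(X) is a derivation of g; (ii) D(X) ∘ D(Y) = D(Y) ∘ D(X) for all X,Y; (iii) D(⁅X,Y⁆) = 0; (iv) D(D(X)(Y)) = 0 for all X,Y. Then the linear map ψ : g → End_k(g) defined by ψ(X) = ad(X) − D(X) satisfies ψ(X) ∘ ψ(Y) − ψ(Y) ∘ ψ(X) = ψ(⁅X,Y⁆ − D(X)(Y) + D(Y)(X)) for all X,Y ∈ g; that is, ψ is a homomorphism of Lie algebras from g equipped with the unipotent-hull bracket to the endomorphism algebra End_k(g) with the commutator bracket. -/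
section

attribute [local instance 100] LieRing.ofAssociativeRing

theorem lie_ad_eq_ad_apply_of_leibniz {R L : Type*} [CommRing R] [LieRing L] [LieAlgebra R L]
    {δ : Module.End R L} (hδ : ∀ a b : L, δ ⁅a, b⁆ = ⁅δ a, b⁆ + ⁅a, δ b⁆) (x : L) :
    ⁅δ, LieAlgebra.ad R L x⁆ = LieAlgebra.ad R L (δ x) := by
  ext y
  simp [LieRing.of_associative_ring_bracket, hδ]

theorem lie_eq_zero_of_comp_comm {R M : Type*} [CommRing R] [AddCommGroup M] [Module R M]
    {δ ε : Module.End R M} (h : δ ∘ₗ ε = ε ∘ₗ δ) : ⁅δ, ε⁆ = 0 := by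
  rw [LieRing.of_associative_ring_bracket, Module.End.mul_eq_comp, Module.End.mul_eq_comp, h,
    sub_self]

variable {k g : Type*} [Field k] [LieRing g] [LieAlgebra k g] {D : g →ₗ[k] Module.End k g}

theorem map_uhBracket_eq_zero (hbracket : ∀ X Y : g, D ⁅X, Y⁆ = 0)
    (hDD : ∀ X Y : g, D (D X Y) = 0) (X Y : g) : D (uhBracket D X Y) = 0 := by
  simp [uhBracket, hbracket, hDD]

theorem ad_uhBracket (hder : ∀ X Y Z : g, D X ⁅Y, Z⁆ = ⁅D X Y, Z⁆ + ⁅Y, D X Z⁆)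
    (hcomm : ∀ X Y : g, D X ∘ₗ D Y = D Y ∘ₗ D X) (X Y : g) :
    LieAlgebra.ad k g (uhBracket D X Y) =
      ⁅LieAlgebra.ad k g X - D X, LieAlgebra.ad k g Y - D Y⁆ := by
  rw [lie_sub, sub_lie, sub_lie, ← lie_skew (LieAlgebra.ad k g X) (D Y),
    lie_ad_eq_ad_apply_of_leibniz (hder X), lie_ad_eq_ad_apply_of_leibniz (hder Y),
    lie_eq_zero_of_comp_comm (hcomm X Y), uhBracket, map_add, map_sub, LieHom.map_lie]
  abel

end

/-- If `D : g → End(g)` is a linear map such that each `D X` is a derivation of `g`,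
the endomorphisms `D X` pairwise commute, `D` vanishes on brackets and on the image of
every `D X`, then `ψ X := ad X - D X` satisfies
`ψ X ∘ ψ Y - ψ Y ∘ ψ X = ψ (⁅X,Y⁆ - D X Y + D Y X)`, i.e. `ψ` is a morphism of Lie
algebras from `g` with the unipotent-hull bracket to `End(g)` with the commutator
bracket. -/
theorem ad_sub_D_isLieHom {k : Type*} [Field k] {g : Type*} [LieRing g] [LieAlgebra k g]
    (D : g →ₗ[k] Module.End k g)
    (hder : ∀ X Y Z : g, D X ⁅Y, Z⁆ = ⁅D X Y, Z⁆ + ⁅Y, D X Z⁆)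
    (hcomm : ∀ X Y : g, D X ∘ₗ D Y = D Y ∘ₗ D X)
    (hbracket : ∀ X Y : g, D ⁅X, Y⁆ = 0)
    (hDD : ∀ X Y : g, D (D X Y) = 0) :
    ∀ X Y : g,
      (LieAlgebra.ad k g X - D X) ∘ₗ (LieAlgebra.ad k g Y - D Y) -
          (LieAlgebra.ad k g Y - D Y) ∘ₗ (LieAlgebra.ad k g X - D X) =
        LieAlgebra.ad k g (uhBracket D X Y) - D (uhBracket D X Y) := by
  intro X Y
  rw [map_uhBracket_eq_zero hbracket hDD, sub_zero, ad_uhBracket hder hcomm,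
    LieRing.of_associative_ring_bracket, Module.End.mul_eq_comp, Module.End.mul_eq_comp]
end

section
/- Let g be a finite-dimensional solvable Lie algebra over ℝ, let n ⊆ g be an ideal which is nilpotent as a Lie algebra and which contains every nilpotent ideal of g (the nilradical), and let V ⊆ g be a linear subspace with g = V ⊕ n as vector spaces. For each A ∈ V let ad(A) = S_A + N_A be the Jordan–Chevalley decomposition of the adjoint endomorphism (S_A semisimple, N_A nilpotent, S_A ∘ N_A = N_A ∘ S_A), and assume S_A(B) = 0 for all A, B ∈ V. Define D : g → End(g) by D(A+X) = S_A for A ∈ V, X ∈ n, and assume moreover that D is linear and that D(X) ∘ D(Y) = D(Y) ∘ D(X) for all X, Y ∈ g. If ⁅X,Y⁆ = D(X)(Y) − D(Y)(X) for all X, Y ∈ g (i.e. the unipotent-hull bracket vanishes identically on g), then there exist an abelian Lie subalgebra a ⊆ g and an abelian Lie ideal m ⊆ g with g = a ⊕ m as vector spaces such that for every A ∈ a the endomorphism ad(A) of g is semisimple. -/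
/-!
Take `a = V` and `m = n`. Since `D (A + X) = S A`, the map `D` vanishes on `n`, and every
`D Y = S B` (with `B ∈ V`) kills `V`. In the identity `⁅X, Y⁆ = D X Y - D Y X` both terms
therefore vanish when `X, Y ∈ n` or `X, Y ∈ V`, so both summands are abelian; and for `A ∈ V`
the second term vanishes for every `Y`, so `ad A = D A = S A` is semisimple.
-/

theorem Submodule.exists_isLieAbelian_lieSubalgebra_coe_eq {R L : Type*} [CommRing R]
    [LieRing L] [LieAlgebra R L] (p : Submodule R L) (h : ∀ x ∈ p, ∀ y ∈ p, ⁅x, y⁆ = 0) :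
    ∃ K : LieSubalgebra R L, IsLieAbelian K ∧ K.toSubmodule = p :=
  ⟨{ p with lie_mem' := fun hx hy => (h _ hx _ hy).symm ▸ p.zero_mem },
    ⟨fun x y => Subtype.ext (h _ x.2 _ y.2)⟩, rfl⟩

theorem LieIdeal.isLieAbelian_of_forall_lie_eq_zero {R L : Type*} [CommRing R] [LieRing L]
    [LieAlgebra R L] (I : LieIdeal R L) (h : ∀ x ∈ I, ∀ y ∈ I, ⁅x, y⁆ = 0) : IsLieAbelian I :=
  ⟨fun x y => Subtype.ext (h _ x.2 _ y.2)⟩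

section

variable {R L : Type*} [CommRing R] [LieRing L] [LieAlgebra R L] {D : L →ₗ[R] Module.End R L}

theorem lie_eq_zero_of_apply_eq_zero (hflat : ∀ X Y : L, ⁅X, Y⁆ = D X Y - D Y X) {X Y : L}
    (hXY : D X Y = 0) (hYX : D Y X = 0) : ⁅X, Y⁆ = 0 := by
  rw [hflat, hXY, hYX, sub_zero]

theorem ad_eq_of_forall_apply_eq_zero (hflat : ∀ X Y : L, ⁅X, Y⁆ = D X Y - D Y X) {A : L}
    (hA : ∀ Y, D Y A = 0) : LieAlgebra.ad R L A = D A := by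
  ext Y
  rw [LieAlgebra.ad_apply, hflat, hA, sub_zero]

variable {V W : Submodule R L} {S : V → Module.End R L}

theorem map_eq_zero_of_mem_of_map_add_eq (hD : ∀ (A : V) (X : L), X ∈ W → D (A + X) = S A)
    {X : L} (hX : X ∈ W) : D X = 0 := by
  have h := (hD 0 X hX).trans (hD 0 0 W.zero_mem).symm
  rwa [Submodule.coe_zero, zero_add, add_zero, map_zero] at h

theorem map_coe_of_map_add_eq (hD : ∀ (A : V) (X : L), X ∈ W → D (A + X) = S A) (A : V) :
    D A = S A := by
  simpa using hD A 0 W.zero_mem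

theorem apply_coe_eq_zero_of_map_add_eq (hD : ∀ (A : V) (X : L), X ∈ W → D (A + X) = S A)
    (hVW : V ⊔ W = ⊤) (hSV : ∀ A B : V, S A B = 0) (Y : L) (B : V) : D Y B = 0 := by
  obtain ⟨A, hA, X, hX, rfl⟩ := Submodule.mem_sup.mp (hVW ▸ Submodule.mem_top (x := Y))
  rw [hD ⟨A, hA⟩ X hX, hSV]

end

theorem abelian_unipotent_hull_implies_semisimple_splitting_general
    {g : Type*} [LieRing g] [LieAlgebra ℝ g]
    (n : LieIdeal ℝ g)
    (V : Submodule ℝ g) (hcompl : IsCompl V (n : Submodule ℝ g))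
    (S : V → Module.End ℝ g)
    (hS : ∀ A : V, (S A).IsSemisimple)
    (hSV : ∀ A B : V, S A (B : g) = 0)
    (D : g →ₗ[ℝ] Module.End ℝ g)
    (hD : ∀ (A : V) (X : g), X ∈ n → D ((A : g) + X) = S A)
    (hflat : ∀ X Y : g, ⁅X, Y⁆ = D X Y - D Y X) :
    ∃ (a : LieSubalgebra ℝ g) (m : LieIdeal ℝ g),
      IsLieAbelian ↥a ∧ IsLieAbelian ↥m ∧
      IsCompl a.toSubmodule (m : Submodule ℝ g) ∧
      ∀ A ∈ a, (LieAlgebra.ad ℝ g A).IsSemisimple := by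
  have hDn : ∀ X ∈ n, D X = 0 := fun X hX => map_eq_zero_of_mem_of_map_add_eq hD hX
  have hD_kills_V : ∀ (Y : g) (B : V), D Y B = 0 :=
    apply_coe_eq_zero_of_map_add_eq hD hcompl.sup_eq_top hSV
  obtain ⟨a, ha_abelian, rfl⟩ := V.exists_isLieAbelian_lieSubalgebra_coe_eq fun A hA B hB =>
    lie_eq_zero_of_apply_eq_zero hflat (hD_kills_V A ⟨B, hB⟩) (hD_kills_V B ⟨A, hA⟩)
  have hn_abelian : IsLieAbelian n := n.isLieAbelian_of_forall_lie_eq_zero fun X hX Y hY =>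
    lie_eq_zero_of_apply_eq_zero hflat (by rw [hDn X hX, LinearMap.zero_apply])
      (by rw [hDn Y hY, LinearMap.zero_apply])
  refine ⟨a, n, ha_abelian, hn_abelian, hcompl, fun A hA => ?_⟩
  rw [ad_eq_of_forall_apply_eq_zero hflat fun Y => hD_kills_V Y ⟨A, hA⟩,
    map_coe_of_map_add_eq hD ⟨A, hA⟩]
  exact hS _

/-- Let `g` be a finite-dimensional solvable real Lie algebra with nilradical `n`
(a nilpotent ideal containing every nilpotent ideal), and `V` a linear complement of `n`.
Suppose for every `A ∈ V` the adjoint endomorphism decomposes as `ad A = S A + N A`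
(Jordan–Chevalley: `S A` semisimple, `N A` nilpotent, commuting), with `S A B = 0` for all
`A, B ∈ V`.  Let `D` be linear with `D (A + X) = S A` for `A ∈ V`, `X ∈ n`, and with
pairwise commuting values.  If the unipotent-hull bracket vanishes identically, i.e.
`⁅X, Y⁆ = D X Y - D Y X` for all `X, Y`, then `g` splits as a vector-space direct sum of
an abelian subalgebra `a` and an abelian ideal `m` such that `ad A` is semisimple for
every `A ∈ a`. -/
theorem abelian_unipotent_hull_implies_semisimple_splitting
    {g : Type*} [LieRing g] [LieAlgebra ℝ g] [FiniteDimensional ℝ g]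
    [LieAlgebra.IsSolvable g]
    (n : LieIdeal ℝ g) (hnilp : LieModule.IsNilpotent ↥n ↥n)
    (hmax : ∀ I : LieIdeal ℝ g, LieModule.IsNilpotent ↥I ↥I → I ≤ n)
    (V : Submodule ℝ g) (hcompl : IsCompl V (n : Submodule ℝ g))
    (S N : V → Module.End ℝ g)
    (hJordan : ∀ A : V, LieAlgebra.ad ℝ g (A : g) = S A + N A)
    (hS : ∀ A : V, (S A).IsSemisimple)
    (hN : ∀ A : V, IsNilpotent (N A))
    (hSN : ∀ A : V, Commute (S A) (N A))
    (hSV : ∀ A B : V, S A (B : g) = 0)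
    (D : g →ₗ[ℝ] Module.End ℝ g)
    (hD : ∀ (A : V) (X : g), X ∈ n → D ((A : g) + X) = S A)
    (hDcomm : ∀ X Y : g, Commute (D X) (D Y))
    (hflat : ∀ X Y : g, ⁅X, Y⁆ = D X Y - D Y X) :
    ∃ (a : LieSubalgebra ℝ g) (m : LieIdeal ℝ g),
      IsLieAbelian ↥a ∧ IsLieAbelian ↥m ∧
      IsCompl a.toSubmodule (m : Submodule ℝ g) ∧
      ∀ A ∈ a, (LieAlgebra.ad ℝ g A).IsSemisimple :=
  abelian_unipotent_hull_implies_semisimple_splitting_general n V hcompl S hS hSV D hD hflat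
end
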